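/- Let δ ∈ (0, 1/2) and suppose (x_i)_{i∈I} in ℝⁿ and (x'_i)_{i∈I} in ℝ^{n'} satisfy the (δ, n, n')-pairwise JL condition. Suppose the squared-distance function D₁(i,j) = ‖x_i − x_j‖² has the √s-multiplicative-perturbation-robustness property for some s with 0 < s ≤ 1−δ, with unique optimal partition 𝔠*. Then 𝔠* is also a k-optimal partition for the projected points (x'_i), i.e. it minimizes the k-means cost J((x'_i), ·) over partitions of I into at most k nonempty blocks. -/

import Mathlib

open Finset

variable {I : Type*} [Fintype I] [DecidableEq I]

/-- Centroid of the points indexed by the finite set `C`. -/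
noncomputable def centroid {E : Type*} [NormedAddCommGroup E] [NormedSpace ℝ E]
    (y : I → E) (C : Finset I) : E :=
  (C.card : ℝ)⁻¹ • ∑ i ∈ C, y i

/-- `k`-means cost `J((y_i), 𝔠) = Σ_i ‖y_i − μ_y(𝔠(i))‖²` of a partition, written
as a sum over the blocks. -/
noncomputable def kmeansCost {E : Type*} [NormedAddCommGroup E] [NormedSpace ℝ E]
    (y : I → E) (c : Finpartition (univ : Finset I)) : ℝ :=
  ∑ C ∈ c.parts, ∑ i ∈ C, ‖y i - centroid y C‖ ^ 2

/-- Within-cluster variance `VAR((y_i), C)`. -/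
noncomputable def clVar {E : Type*} [NormedAddCommGroup E] [NormedSpace ℝ E]
    (y : I → E) (C : Finset I) : ℝ :=
  (C.card : ℝ)⁻¹ * ∑ i ∈ C, ‖y i - centroid y C‖ ^ 2

/-- The `(δ, n, n')`-pairwise Johnson–Lindenstrauss condition. -/
def JLpair (n n' : ℕ) (δ : ℝ) {I : Type*} (x : I → EuclideanSpace ℝ (Fin n))
    (x' : I → EuclideanSpace ℝ (Fin n')) : Prop :=
  ∀ i j : I, (1 - δ) * ‖x i - x j‖ ^ 2 ≤ (n : ℝ) / n' * ‖x' i - x' j‖ ^ 2 ∧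
    (n : ℝ) / n' * ‖x' i - x' j‖ ^ 2 ≤ (1 + δ) * ‖x i - x j‖ ^ 2

/-- A partition of `I` into at most `k` (automatically nonempty) blocks is `k`-optimal
for the points `y` if it minimizes the k-means cost among all such partitions. -/
def kOptimal {E : Type*} [NormedAddCommGroup E] [NormedSpace ℝ E] (k : ℕ) (y : I → E)
    (c : Finpartition (univ : Finset I)) : Prop :=
  c.parts.card ≤ k ∧ ∀ d : Finpartition (univ : Finset I), d.parts.card ≤ k →
    kmeansCost y c ≤ kmeansCost y d

/-- A partition is k-means-stable (a local minimum of the k-means algorithm) for points `y`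
if every point is at least as close to its own block's centroid as to any other centroid. -/
def kmeansStable {E : Type*} [NormedAddCommGroup E] [NormedSpace ℝ E] (y : I → E)
    (c : Finpartition (univ : Finset I)) : Prop :=
  ∀ i : I, ∀ Ci ∈ c.parts, i ∈ Ci → ∀ C ∈ c.parts,
    ‖y i - centroid y Ci‖ ≤ ‖y i - centroid y C‖

/-- `p` bounds the cluster spread of `y` with respect to the partition `c`. -/
def spreadBound {E : Type*} [NormedAddCommGroup E] [NormedSpace ℝ E] (p : ℝ) (y : I → E)
    (c : Finpartition (univ : Finset I)) : Prop :=
  ∀ C₁ ∈ c.parts, ∀ C₂ ∈ c.parts, C₁ ≠ C₂ →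
    clVar y C₁ * ((C₁.card + C₂.card : ℝ) / C₂.card)
      + clVar y C₂ * ((C₁.card + C₂.card : ℝ) / C₁.card)
      ≤ p * ‖centroid y C₁ - centroid y C₂‖ ^ 2

/-- Cost of a partition with respect to an abstract squared-distance function `D`. -/
noncomputable def costD (D : I → I → ℝ) (c : Finpartition (univ : Finset I)) : ℝ :=
  ∑ C ∈ c.parts, (1 / (2 * (C.card : ℝ))) * ∑ i ∈ C, ∑ j ∈ C, D i j

/-- `c` is the unique minimizer of `costD D'` over partitions into at most `k` nonempty
blocks, for every symmetric nonnegative `D'` vanishing on the diagonal with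
`s·D ≤ D' ≤ (1/s)·D` off the diagonal.  `D` has the √s-multiplicative-perturbation-robustness
property iff such a partition `c` with at most `k` blocks exists. -/
def robustUniqueOpt (k : ℕ) (s : ℝ) (D : I → I → ℝ)
    (c : Finpartition (univ : Finset I)) : Prop :=
  c.parts.card ≤ k ∧
  ∀ D' : I → I → ℝ, (∀ i j, D' j i = D' i j) → (∀ i, D' i i = 0) → (∀ i j, 0 ≤ D' i j) →
    (∀ i j, i ≠ j → s * D i j ≤ D' i j ∧ D' i j ≤ (1 / s) * D i j) →
    ∀ d : Finpartition (univ : Finset I), d.parts.card ≤ k → d ≠ c →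
      costD D' c < costD D' d

/-!
Up to the factor `2|C|`, the sum of the squared pairwise distances within a block is its
`k`-means cost, so the `k`-means cost of any points equals the pairwise cost `costD` of their
squared distances. After rescaling by `n / n'`, the squared distances of the projected points
are a multiplicative perturbation of those of the original points within the factors
`1 - δ ≥ s` and `1 + δ ≤ 1 / s`; robustness then makes `𝔠*` optimal for them.
-/

section Centroid

variable {ι E : Type*} [NormedAddCommGroup E] (y : ι → E) {C : Finset ι}

lemma sum_sub_centroid_eq_zero [NormedSpace ℝ E] (hC : C.Nonempty) :
    ∑ i ∈ C, (y i - centroid y C) = 0 := by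
  have hcard : (#C : ℝ) ≠ 0 := Nat.cast_ne_zero.mpr hC.card_pos.ne'
  rw [sum_sub_distrib, sum_const, _root_.centroid, ← Nat.cast_smul_eq_nsmul ℝ, smul_smul,
    mul_inv_cancel₀ hcard, one_smul, sub_self]

lemma sum_sum_norm_sub_sq_eq [InnerProductSpace ℝ E] (hC : C.Nonempty) :
    ∑ i ∈ C, ∑ j ∈ C, ‖y i - y j‖ ^ 2 = 2 * #C * ∑ i ∈ C, ‖y i - centroid y C‖ ^ 2 := by
  set μ := centroid y C
  have expand (i j : ι) : ‖y i - y j‖ ^ 2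
      = ‖y i - μ‖ ^ 2 + ‖y j - μ‖ ^ 2 - 2 * inner ℝ (y i - μ) (y j - μ) := by
    rw [← sub_sub_sub_cancel_right (y i) (y j) μ, norm_sub_sq_real]
    ring
  have row (i : ι) : ∑ j ∈ C, ‖y i - y j‖ ^ 2 = #C * ‖y i - μ‖ ^ 2 + ∑ j ∈ C, ‖y j - μ‖ ^ 2 := by
    simp_rw [expand i]
    rw [sum_sub_distrib, sum_add_distrib, sum_const, ← mul_sum, ← inner_sum,
      sum_sub_centroid_eq_zero y hC, inner_zero_right, nsmul_eq_mul]
    ring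
  simp_rw [row]
  rw [sum_add_distrib, ← mul_sum, sum_const, nsmul_eq_mul]
  ring

end Centroid

lemma costD_const_mul (r : ℝ) (D : I → I → ℝ) (c : Finpartition (univ : Finset I)) :
    costD (fun i j => r * D i j) c = r * costD D c := by
  simp only [costD, mul_sum]
  refine sum_congr rfl fun C _ => sum_congr rfl fun i _ => sum_congr rfl fun j _ => ?_
  ring

lemma costD_norm_sub_sq {E : Type*} [NormedAddCommGroup E] [InnerProductSpace ℝ E]
    (y : I → E) (c : Finpartition (univ : Finset I)) :
    costD (fun i j => ‖y i - y j‖ ^ 2) c = kmeansCost y c := by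
  refine sum_congr rfl fun C hC => ?_
  have hCne : C.Nonempty := c.nonempty_of_mem_parts hC
  have hcard : (#C : ℝ) ≠ 0 := Nat.cast_ne_zero.mpr hCne.card_pos.ne'
  rw [sum_sum_norm_sub_sq_eq y hCne]
  field_simp

lemma robustUniqueOpt.costD_le {k : ℕ} {s : ℝ} {D D' : I → I → ℝ}
    {c : Finpartition (univ : Finset I)} (hc : robustUniqueOpt k s D c)
    (hsymm : ∀ i j, D' j i = D' i j) (hdiag : ∀ i, D' i i = 0) (hnonneg : ∀ i j, 0 ≤ D' i j)
    (hbounds : ∀ i j, i ≠ j → s * D i j ≤ D' i j ∧ D' i j ≤ (1 / s) * D i j)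
    {d : Finpartition (univ : Finset I)} (hd : d.parts.card ≤ k) :
    costD D' c ≤ costD D' d := by
  obtain rfl | hdc := eq_or_ne d c
  · exact le_rfl
  · exact (hc.2 D' hsymm hdiag hnonneg hbounds d hd hdc).le

lemma one_add_le_one_div_of_le_one_sub {δ s : ℝ} (hs0 : 0 < s) (hs : s ≤ 1 - δ) :
    1 + δ ≤ 1 / s :=
  calc 1 + δ ≤ 1 / (1 - δ) := by
        rw [le_div_iff₀ (hs0.trans_le hs)]
        nlinarith [sq_nonneg δ]
    _ ≤ 1 / s := one_div_le_one_div_of_le hs0 hs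

lemma JLpair.perturbation_bounds {n n' : ℕ} {δ s : ℝ} {ι : Type*}
    {x : ι → EuclideanSpace ℝ (Fin n)} {x' : ι → EuclideanSpace ℝ (Fin n')}
    (hJL : JLpair n n' δ x x') (hs0 : 0 < s) (hs : s ≤ 1 - δ) (i j : ι) :
    s * ‖x i - x j‖ ^ 2 ≤ (n : ℝ) / n' * ‖x' i - x' j‖ ^ 2 ∧
      (n : ℝ) / n' * ‖x' i - x' j‖ ^ 2 ≤ (1 / s) * ‖x i - x j‖ ^ 2 := by
  obtain ⟨hlower, hupper⟩ := hJL i j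
  exact ⟨(mul_le_mul_of_nonneg_right hs (sq_nonneg _)).trans hlower,
    hupper.trans (mul_le_mul_of_nonneg_right (one_add_le_one_div_of_le_one_sub hs0 hs)
      (sq_nonneg _))⟩

theorem identical_global_optimum_general {n n' : ℕ} (hn'0 : 0 < n') (hn'n : n' < n)
    {δ : ℝ}
    {I : Type*} [Fintype I] [DecidableEq I]
    (x : I → EuclideanSpace ℝ (Fin n)) (x' : I → EuclideanSpace ℝ (Fin n'))
    (hJL : JLpair n n' δ x x') (k : ℕ)
    {s : ℝ} (hs0 : 0 < s) (hs : s ≤ 1 - δ)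
    (cstar : Finpartition (univ : Finset I))
    (hrob : robustUniqueOpt k s (fun i j => ‖x i - x j‖ ^ 2) cstar) :
    ∀ d : Finpartition (univ : Finset I), d.parts.card ≤ k →
      kmeansCost x' cstar ≤ kmeansCost x' d := by
  intro d hd
  have hr : 0 < (n : ℝ) / n' := by
    have : 0 < n := hn'0.trans hn'n
    positivity
  have hcost := hrob.costD_le (D' := fun i j => (n : ℝ) / n' * ‖x' i - x' j‖ ^ 2)
    (fun i j => by rw [norm_sub_rev]) (fun i => by simp) (fun i j => by positivity)
    (fun i j _ => hJL.perturbation_bounds hs0 hs i j) hd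
  rw [costD_const_mul, costD_const_mul, costD_norm_sub_sq, costD_norm_sub_sq] at hcost
  exact le_of_mul_le_mul_left hcost hr

/-- If the squared distances of the original points are `√s`-multiplicative-perturbation
robust with `s ≤ 1 − δ`, then the unique optimal partition of the original points is also
a k-optimal partition for the projected points. -/
theorem identical_global_optimum {n n' : ℕ} (hn'0 : 0 < n') (hn'n : n' < n)
    {δ : ℝ} (hδ0 : 0 < δ) (hδ : δ < 1 / 2)
    {I : Type*} [Fintype I] [DecidableEq I]
    (x : I → EuclideanSpace ℝ (Fin n)) (x' : I → EuclideanSpace ℝ (Fin n'))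
    (hJL : JLpair n n' δ x x') (k : ℕ) (hk : 1 ≤ k)
    {s : ℝ} (hs0 : 0 < s) (hs : s ≤ 1 - δ)
    (cstar : Finpartition (univ : Finset I))
    (hrob : robustUniqueOpt k s (fun i j => ‖x i - x j‖ ^ 2) cstar) :
    ∀ d : Finpartition (univ : Finset I), d.parts.card ≤ k →
      kmeansCost x' cstar ≤ kmeansCost x' d :=
  identical_global_optimum_general hn'0 hn'n x x' hJL k hs0 hs cstar hrob
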